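/- arXiv:2504.01096 — 3 statements merged into one kernel-verified Lean document; each statement's English description precedes it below -/
import Mathlib

section
/- Let n ≥ 1, P ∈ [0,1]^n, and let Π*(P) be the product distribution induced by P. Then for every probability distribution Π ∈ S(P), H(Π) ≤ H(Π*(P)). -/
open Finset

/-- Interpret a Boolean state coordinate as a real number (1 = compromised, 0 = secure). -/
def bToR (v : Bool) : ℝ := if v then 1 else 0

/-- The product distribution `Π*(P)` on `{0,1}^n` induced by the marginal vector `P`:
`Π*(P)_x = ∏_l (P_l·x_l + (1−P_l)·(1−x_l))`. -/
noncomputable def piStar {n : ℕ} (P : Fin n → ℝ) (x : Fin n → Bool) : ℝ :=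
  ∏ l, (P l * bToR (x l) + (1 - P l) * (1 - bToR (x l)))

/-- `Q ∈ S(P)`: `Q` is a probability distribution on `{0,1}^n` whose marginals match `P`. -/
def memS {n : ℕ} (P : Fin n → ℝ) (Q : (Fin n → Bool) → ℝ) : Prop :=
  (∀ x, 0 ≤ Q x) ∧ (∑ x : Fin n → Bool, Q x = 1) ∧
    (∀ l, ∑ x : Fin n → Bool, bToR (x l) * Q x = P l)

/-- Entropy `H(Q) = −Σ_x Q_x ln Q_x` (the convention `0 · ln 0 = 0` holds since
`Real.log 0 = 0` in Mathlib). -/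
noncomputable def entropy {n : ℕ} (Q : (Fin n → Bool) → ℝ) : ℝ :=
  -∑ x : Fin n → Bool, Q x * Real.log (Q x)

lemma factor_eq (p : ℝ) (b : Bool) :
    p * bToR b + (1 - p) * (1 - bToR b) = if b then p else 1 - p := by
  cases b <;> simp [bToR]

lemma piStar_eq {n : ℕ} (P : Fin n → ℝ) (x : Fin n → Bool) :
    piStar P x = ∏ l, (if x l then P l else 1 - P l) :=
  Finset.prod_congr rfl fun l _ => factor_eq (P l) (x l)

lemma log_factor (p : ℝ) (b : Bool) :
    Real.log (if b then p else 1 - p)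
      = bToR b * Real.log p + (1 - bToR b) * Real.log (1 - p) := by
  cases b <;> simp [bToR]

lemma piStar_nonneg {n : ℕ} (P : Fin n → ℝ) (hP : ∀ l, P l ∈ Set.Icc (0:ℝ) 1)
    (x : Fin n → Bool) : 0 ≤ piStar P x := by
  rw [piStar_eq]
  refine Finset.prod_nonneg fun l _ => ?_
  rcases hP l with ⟨h0, h1⟩
  cases x l <;> simp <;> linarith

lemma sum_piStar {n : ℕ} (P : Fin n → ℝ) :
    ∑ x : Fin n → Bool, piStar P x = 1 := by
  have h := Finset.prod_univ_sum (fun _ : Fin n => (Finset.univ : Finset Bool))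
    (fun l b => if b then P l else 1 - P l)
  rw [Fintype.piFinset_univ] at h
  calc ∑ x : Fin n → Bool, piStar P x
      = ∑ x : Fin n → Bool, ∏ l, (if x l then P l else 1 - P l) :=
        Finset.sum_congr rfl fun x _ => piStar_eq P x
    _ = ∏ l, ∑ b : Bool, (if b then P l else 1 - P l) := h.symm
    _ = 1 := by simp

lemma marginal_piStar {n : ℕ} (P : Fin n → ℝ) (l : Fin n) :
    ∑ x : Fin n → Bool, bToR (x l) * piStar P x = P l := by
  set g : Fin n → Bool → ℝ := fun k b =>
    if k = l then bToR b * (if b then P k else 1 - P k)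
    else (if b then P k else 1 - P k) with hg
  have key : ∀ x : Fin n → Bool, bToR (x l) * piStar P x = ∏ k, g k (x k) := by
    intro x
    rw [piStar_eq]
    rw [Finset.prod_eq_prod_diff_singleton_mul (Finset.mem_univ l)]
    rw [Finset.prod_eq_prod_diff_singleton_mul (Finset.mem_univ l)
      (fun k => g k (x k))]
    have h1 : ∏ k ∈ Finset.univ \ {l}, g k (x k)
        = ∏ k ∈ Finset.univ \ {l}, (if x k then P k else 1 - P k) := by
      refine Finset.prod_congr rfl fun k hk => ?_
      have : k ≠ l := by simpa using (Finset.mem_sdiff.mp hk).2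
      simp [hg, this]
    rw [h1]
    simp [hg]
    split <;> ring
  rw [Finset.sum_congr rfl fun x _ => key x]
  have h := Finset.prod_univ_sum (fun _ : Fin n => (Finset.univ : Finset Bool)) g
  rw [Fintype.piFinset_univ] at h
  rw [← h]
  have h2 : ∀ k : Fin n, (∑ b : Bool, g k b) = if k = l then P k else 1 := by
    intro k
    by_cases hk : k = l <;> simp [hg, hk, bToR]
  rw [Finset.prod_congr rfl fun k _ => h2 k]
  simp

lemma support_subset {n : ℕ} (P : Fin n → ℝ) (Q : (Fin n → Bool) → ℝ)
    (hQ : memS P Q) (x : Fin n → Bool) (hx : Q x ≠ 0) : piStar P x ≠ 0 := by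
  obtain ⟨h0, h1, hm⟩ := hQ
  rw [piStar_eq]
  rw [Finset.prod_ne_zero_iff]
  intro l _
  by_cases hl : x l
  · -- factor is P l; if P l = 0 then Q x = 0
    rw [if_pos hl]
    intro hPl
    apply hx
    have hsum : ∑ y : Fin n → Bool, bToR (y l) * Q y = 0 := by rw [hm l, hPl]
    have := (Finset.sum_eq_zero_iff_of_nonneg
      (fun y _ => mul_nonneg (by cases y l <;> simp [bToR]) (h0 y))).mp hsum
      x (Finset.mem_univ x)
    simpa [bToR, hl] using this
  · rw [if_neg hl]
    intro hPl
    apply hx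
    have hPl1 : P l = 1 := by linarith
    have hsum : ∑ y : Fin n → Bool, (1 - bToR (y l)) * Q y = 0 := by
      have : ∑ y : Fin n → Bool, (1 - bToR (y l)) * Q y
          = (∑ y : Fin n → Bool, Q y) - ∑ y : Fin n → Bool, bToR (y l) * Q y := by
        rw [← Finset.sum_sub_distrib]
        exact Finset.sum_congr rfl fun y _ => by ring
      rw [this, h1, hm l, hPl1]
      ring
    have := (Finset.sum_eq_zero_iff_of_nonneg
      (fun y _ => mul_nonneg (by cases y l <;> simp [bToR]) (h0 y))).mp hsum
      x (Finset.mem_univ x)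
    simpa [bToR, hl] using this

/-- Cross-entropy identity: for any `Q` with the marginals `P` and supported
inside the support of `piStar P`, the cross entropy is a fixed constant. -/
lemma cross_entropy {n : ℕ} (P : Fin n → ℝ) (Q : (Fin n → Bool) → ℝ)
    (h1 : ∑ x : Fin n → Bool, Q x = 1)
    (hm : ∀ l, ∑ x : Fin n → Bool, bToR (x l) * Q x = P l)
    (hsupp : ∀ x, Q x ≠ 0 → piStar P x ≠ 0) :
    ∑ x : Fin n → Bool, Q x * Real.log (piStar P x)
      = ∑ l, (P l * Real.log (P l) + (1 - P l) * Real.log (1 - P l)) := by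
  have step1 : ∀ x : Fin n → Bool,
      Q x * Real.log (piStar P x)
        = ∑ l, Q x * (bToR (x l) * Real.log (P l)
            + (1 - bToR (x l)) * Real.log (1 - P l)) := by
    intro x
    by_cases hx : Q x = 0
    · simp [hx]
    · have hne : piStar P x ≠ 0 := hsupp x hx
      rw [piStar_eq] at hne ⊢
      rw [Finset.prod_ne_zero_iff] at hne
      rw [Real.log_prod hne, Finset.mul_sum]
      exact Finset.sum_congr rfl fun l _ => by rw [log_factor]
    -- end
  rw [Finset.sum_congr rfl fun x _ => step1 x, Finset.sum_comm]
  refine Finset.sum_congr rfl fun l _ => ?_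
  have e : ∀ x : Fin n → Bool,
      Q x * (bToR (x l) * Real.log (P l) + (1 - bToR (x l)) * Real.log (1 - P l))
        = Real.log (P l) * (bToR (x l) * Q x)
          + Real.log (1 - P l) * (Q x - bToR (x l) * Q x) := by
    intro x; ring
  rw [Finset.sum_congr rfl fun x _ => e x, Finset.sum_add_distrib,
    ← Finset.mul_sum, ← Finset.mul_sum, hm l, Finset.sum_sub_distrib, h1, hm l]
  ring

/-- Gibbs inequality. -/
lemma gibbs {n : ℕ} (Q R : (Fin n → Bool) → ℝ)
    (hQ0 : ∀ x, 0 ≤ Q x) (hQ1 : ∑ x : Fin n → Bool, Q x = 1)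
    (hR0 : ∀ x, 0 ≤ R x) (hR1 : ∑ x : Fin n → Bool, R x = 1)
    (hsupp : ∀ x, Q x ≠ 0 → R x ≠ 0) :
    ∑ x : Fin n → Bool, Q x * Real.log (R x)
      ≤ ∑ x : Fin n → Bool, Q x * Real.log (Q x) := by
  have key : ∀ x : Fin n → Bool,
      Q x * Real.log (R x) - Q x * Real.log (Q x) ≤ R x - Q x := by
    intro x
    by_cases hx : Q x = 0
    · simp [hx]; exact hR0 x
    · have hq : 0 < Q x := lt_of_le_of_ne (hQ0 x) (Ne.symm hx)
      have hr : 0 < R x := lt_of_le_of_ne (hR0 x) (Ne.symm (hsupp x hx))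
      have hlog : Real.log (R x / Q x) ≤ R x / Q x - 1 :=
        Real.log_le_sub_one_of_pos (div_pos hr hq)
      rw [Real.log_div (ne_of_gt hr) (ne_of_gt hq)] at hlog
      have := mul_le_mul_of_nonneg_left hlog (le_of_lt hq)
      calc Q x * Real.log (R x) - Q x * Real.log (Q x)
          = Q x * (Real.log (R x) - Real.log (Q x)) := by ring
        _ ≤ Q x * (R x / Q x - 1) := this
        _ = R x - Q x := by field_simp
  have hsum : ∑ x : Fin n → Bool,
      (Q x * Real.log (R x) - Q x * Real.log (Q x))
        ≤ ∑ x : Fin n → Bool, (R x - Q x) :=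
    Finset.sum_le_sum fun x _ => key x
  rw [Finset.sum_sub_distrib, Finset.sum_sub_distrib, hQ1, hR1] at hsum
  linarith


/-- every `Q ∈ S(P)` has entropy at most that of the product
distribution `Π*(P)`. -/
theorem entropy_le_entropy_piStar {n : ℕ} (hn : 1 ≤ n)
    (P : Fin n → ℝ) (hP : ∀ l, P l ∈ Set.Icc (0 : ℝ) 1)
    (Q : (Fin n → Bool) → ℝ) (hQ : memS P Q) :
    entropy Q ≤ entropy (piStar P) := by
  obtain ⟨h0, h1, hm⟩ := hQ
  have hsupp : ∀ x, Q x ≠ 0 → piStar P x ≠ 0 :=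
    support_subset P Q ⟨h0, h1, hm⟩
  have hcrossQ := cross_entropy P Q h1 hm hsupp
  have hcrossR := cross_entropy P (piStar P) (sum_piStar P) (marginal_piStar P)
    (fun x hx => hx)
  have hg := gibbs Q (piStar P) h0 h1 (piStar_nonneg P hP) (sum_piStar P) hsupp
  unfold entropy
  rw [hcrossQ] at hg
  rw [← hcrossR] at hg
  linarith
end

section
/- Let n ≥ 1, P ∈ [0,1]^n, and let Π*(P) be the product distribution induced by P. If Π ∈ S(P) satisfies H(Π) = H(Π*(P)), then Π = Π*(P). -/
open Finset

lemma sum_prod_bool {n : ℕ} (w : Fin n → Bool → ℝ) :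
    ∑ x : Fin n → Bool, ∏ l, w l (x l) = ∏ l, (w l true + w l false) := by
  have h := Finset.prod_univ_sum (fun _ : Fin n => (Finset.univ : Finset Bool)) w
  simp only [Fintype.piFinset_univ] at h
  rw [← h]
  congr 1
  funext l
  simp [Fintype.sum_bool, add_comm]

/-- if `Q ∈ S(P)` attains the entropy of the product distribution
`Π*(P)`, then `Q = Π*(P)`. -/
theorem eq_piStar_of_entropy_eq {n : ℕ} (hn : 1 ≤ n)
    (P : Fin n → ℝ) (hP : ∀ l, P l ∈ Set.Icc (0 : ℝ) 1)
    (Q : (Fin n → Bool) → ℝ) (hQ : memS P Q)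
    (hH : entropy Q = entropy (piStar P)) :
    Q = piStar P := by
  classical
  obtain ⟨hQ0, hQ1, hQm⟩ := hQ
  set c : Fin n → Bool → ℝ := fun l b => P l * bToR b + (1 - P l) * (1 - bToR b) with hc
  have hct : ∀ l, c l true = P l := by intro l; simp [hc, bToR]
  have hcf : ∀ l, c l false = 1 - P l := by intro l; simp [hc, bToR]
  have hc0 : ∀ l b, 0 ≤ c l b := by
    intro l b
    cases b
    · rw [hcf]; linarith [(hP l).2]
    · rw [hct]; exact (hP l).1
  have hfx : ∀ x, piStar P x = ∏ l, c l (x l) := fun x => rfl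
  have hf0 : ∀ x, 0 ≤ piStar P x := by
    intro x; rw [hfx]; exact Finset.prod_nonneg fun l _ => hc0 l (x l)
  -- sum of piStar is 1
  have hfsum : ∑ x : Fin n → Bool, piStar P x = 1 := by
    simp only [hfx]
    rw [sum_prod_bool]
    apply Finset.prod_eq_one
    intro l _
    rw [hct, hcf]; ring
  -- marginals of piStar
  have hfm : ∀ l0, ∑ x : Fin n → Bool, bToR (x l0) * piStar P x = P l0 := by
    intro l0
    have key : ∀ x : Fin n → Bool, bToR (x l0) * piStar P x
        = ∏ l, ((if l = l0 then bToR (x l) else 1) * c l (x l)) := by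
      intro x
      rw [Finset.prod_mul_distrib, Finset.prod_ite_eq' Finset.univ l0 (fun l => bToR (x l))]
      simp [hfx]
    simp only [key]
    rw [sum_prod_bool (fun l b => (if l = l0 then bToR b else 1) * c l b)]
    have : ∀ l, ((if l = l0 then bToR true else 1) * c l true
        + (if l = l0 then bToR false else 1) * c l false)
        = if l = l0 then P l else 1 := by
      intro l
      by_cases h : l = l0 <;> simp [h, bToR, hct, hcf] <;> ring
    simp only [this]
    rw [Finset.prod_ite_eq' Finset.univ l0 P]
    simp
  -- complementary marginals
  have hQc : ∀ l, ∑ x : Fin n → Bool, (1 - bToR (x l)) * Q x = 1 - P l := by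
    intro l
    have : ∀ x : Fin n → Bool, (1 - bToR (x l)) * Q x = Q x - bToR (x l) * Q x := by
      intro x; ring
    simp only [this]
    rw [Finset.sum_sub_distrib, hQ1, hQm l]
  -- support lemma for Q
  have hsupp : ∀ x : Fin n → Bool, Q x ≠ 0 → ∀ l, 0 < c l (x l) := by
    intro x hx l
    rcases (hc0 l (x l)).lt_or_eq with h | h
    · exact h
    · exfalso
      apply hx
      cases hxl : x l
      · -- c l false = 1 - P l = 0
        have h1 : (1 : ℝ) - P l = 0 := by rw [← hcf l, ← hxl]; exact h.symm
        have h2 : ∑ y : Fin n → Bool, (1 - bToR (y l)) * Q y = 0 := by rw [hQc l, h1]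
        have h3 := (Finset.sum_eq_zero_iff_of_nonneg (by
          intro y _
          have : 0 ≤ 1 - bToR (y l) := by cases y l <;> simp [bToR]
          exact mul_nonneg this (hQ0 y))).mp h2 x (Finset.mem_univ x)
        simpa [hxl, bToR] using h3
      · have h1 : P l = 0 := by rw [← hct l, ← hxl]; exact h.symm
        have h2 : ∑ y : Fin n → Bool, bToR (y l) * Q y = 0 := by rw [hQm l, h1]
        have h3 := (Finset.sum_eq_zero_iff_of_nonneg (by
          intro y _
          have : 0 ≤ bToR (y l) := by cases y l <;> simp [bToR]
          exact mul_nonneg this (hQ0 y))).mp h2 x (Finset.mem_univ x)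
        simpa [hxl, bToR] using h3
  -- cross-entropy identity
  have hcross : ∀ R : (Fin n → Bool) → ℝ,
      (∀ x, R x ≠ 0 → ∀ l, c l (x l) ≠ 0) →
      (∀ l, ∑ x : Fin n → Bool, bToR (x l) * R x = P l) →
      (∑ x : Fin n → Bool, R x = 1) →
      ∑ x : Fin n → Bool, R x * Real.log (piStar P x)
        = ∑ l, (P l * Real.log (P l) + (1 - P l) * Real.log (1 - P l)) := by
    intro R hRs hRm hR1
    have hRc : ∀ l, ∑ x : Fin n → Bool, (1 - bToR (x l)) * R x = 1 - P l := by
      intro l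
      have : ∀ x : Fin n → Bool, (1 - bToR (x l)) * R x = R x - bToR (x l) * R x := by
        intro x; ring
      simp only [this]
      rw [Finset.sum_sub_distrib, hR1, hRm l]
    have step1 : ∀ x : Fin n → Bool, R x * Real.log (piStar P x)
        = ∑ l, R x * Real.log (c l (x l)) := by
      intro x
      by_cases hx : R x = 0
      · simp [hx]
      · rw [hfx, Real.log_prod (fun l _ => hRs x hx l), Finset.mul_sum]
    simp only [step1]
    rw [Finset.sum_comm]
    congr 1
    funext l
    have step2 : ∀ x : Fin n → Bool, R x * Real.log (c l (x l))
        = bToR (x l) * R x * Real.log (P l) + (1 - bToR (x l)) * R x * Real.log (1 - P l) := by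
      intro x
      cases hxl : x l <;> simp [hxl, bToR, hct, hcf]
    simp only [step2]
    rw [Finset.sum_add_distrib, ← Finset.sum_mul, ← Finset.sum_mul, hRm l, hRc l]
  -- piStar's support condition
  have hfs : ∀ x : Fin n → Bool, piStar P x ≠ 0 → ∀ l, c l (x l) ≠ 0 := by
    intro x hx l
    rw [hfx] at hx
    exact (Finset.prod_ne_zero_iff.mp hx) l (Finset.mem_univ l)
  have hQcross := hcross Q (fun x hx l => (hsupp x hx l).ne') hQm hQ1
  have hfcross := hcross (piStar P) hfs hfm hfsum
  -- from entropy equality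
  have key : ∑ x : Fin n → Bool, Q x * Real.log (Q x)
      = ∑ x : Fin n → Bool, Q x * Real.log (piStar P x) := by
    have h1 : ∑ x : Fin n → Bool, Q x * Real.log (Q x)
        = ∑ x : Fin n → Bool, piStar P x * Real.log (piStar P x) := by
      have := hH
      unfold entropy at this
      linarith
    rw [h1, hQcross, ← hfcross]
  -- Gibbs inequality pointwise
  set D : (Fin n → Bool) → ℝ :=
    fun x => Q x * (Real.log (Q x) - Real.log (piStar P x)) - Q x + piStar P x with hD
  have hDsum : ∑ x : Fin n → Bool, D x = 0 := by
    simp only [hD, mul_sub]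
    rw [Finset.sum_add_distrib, Finset.sum_sub_distrib, Finset.sum_sub_distrib, key, hQ1, hfsum]
    ring
  have hfpos : ∀ x : Fin n → Bool, Q x ≠ 0 → 0 < piStar P x := by
    intro x hx
    rw [hfx]
    exact Finset.prod_pos fun l _ => hsupp x hx l
  have hD0 : ∀ x : Fin n → Bool, 0 ≤ D x := by
    intro x
    by_cases hx : Q x = 0
    · simp [hD, hx, hf0 x]
    · have hq : 0 < Q x := (hQ0 x).lt_of_ne (Ne.symm hx)
      have hf : 0 < piStar P x := hfpos x hx
      set t := piStar P x / Q x with ht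
      have htpos : 0 < t := div_pos hf hq
      have hlog : Real.log t ≤ t - 1 := Real.log_le_sub_one_of_pos htpos
      have hrw : D x = Q x * ((t - 1) - Real.log t) := by
        rw [hD]
        simp only
        rw [ht, Real.log_div hf.ne' hq.ne']
        field_simp
        ring
      rw [hrw]
      exact mul_nonneg hq.le (by linarith)
  have hDall : ∀ x : Fin n → Bool, D x = 0 := by
    intro x
    exact (Finset.sum_eq_zero_iff_of_nonneg (fun y _ => hD0 y)).mp hDsum x (Finset.mem_univ x)
  funext x
  by_cases hx : Q x = 0
  · have := hDall x
    rw [hD] at this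
    simp only [hx] at this
    simp at this
    rw [hx, ← this]
  · have hq : 0 < Q x := (hQ0 x).lt_of_ne (Ne.symm hx)
    have hf : 0 < piStar P x := hfpos x hx
    set t := piStar P x / Q x with ht
    have htpos : 0 < t := div_pos hf hq
    have hrw : D x = Q x * ((t - 1) - Real.log t) := by
      rw [hD]
      simp only
      rw [ht, Real.log_div hf.ne' hq.ne']
      field_simp
      ring
    have hDx := hDall x
    rw [hrw] at hDx
    have h2 : (t - 1) - Real.log t = 0 := by
      rcases mul_eq_zero.mp hDx with h | h
      · exact absurd h hq.ne'
      · exact h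
    have ht1 : t = 1 := by
      by_contra hne
      have := Real.log_lt_sub_one_of_pos htpos hne
      linarith
    have : piStar P x = Q x := by
      field_simp [ht] at ht1
      rw [ht] at ht1
      exact (div_eq_one_iff_eq hq.ne').mp ht1
    linarith
end

section
/- Let n ≥ 1, p, q ∈ [0,1], y ∈ {0,1}^n, P ∈ [0,1]^n, and set T(y)_x = ∏_{l=1}^n [ y_l·(p·x_l + (1−q)·(1−x_l)) + (1−y_l)·(q·(1−x_l) + (1−p)·x_l) ]. Assume Σ_{x∈{0,1}^n} T(y)_x · Π*(P)_x ≠ 0. Then for every node r ∈ {1,…,n}: ( Σ_{x∈{0,1}^n} x_r · T(y)_x · Π*(P)_x ) / ( Σ_{x∈{0,1}^n} T(y)_x · Π*(P)_x ) = ( p·y_r·P_r + (1−y_r)·(1−p)·P_r ) / ( y_r·(p·P_r + (1−q)·(1−P_r)) + (1−y_r)·((1−p)·P_r + q·(1−P_r)) ). -/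
open Finset

/-- The observation likelihood vector `T(y)` with true-positive probability `p` and
true-negative probability `q`:
`T(y)_x = ∏_l [ y_l·(p·x_l + (1−q)·(1−x_l)) + (1−y_l)·(q·(1−x_l) + (1−p)·x_l) ]`. -/
noncomputable def Tlike {n : ℕ} (p q : ℝ) (y : Fin n → Bool) (x : Fin n → Bool) : ℝ :=
  ∏ l, (bToR (y l) * (p * bToR (x l) + (1 - q) * (1 - bToR (x l))) +
    (1 - bToR (y l)) * (q * (1 - bToR (x l)) + (1 - p) * bToR (x l)))

/-!
Both the likelihood `T(y)` and the prior `Π*(P)` factor over the nodes, so `T(y) ∘ Π*(P)` is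
again a product of one-node weights. Summing a product of one-node weights over `{0,1}^n` gives
the product of the one-node sums; in the ratio defining the posterior marginal of node `r`, all
factors except the `r`-th are common to numerator and denominator and cancel, leaving the
single-node Bayes update.
-/

section ProductMarginal

variable {ι β K : Type*} [Fintype ι] [DecidableEq ι] [Fintype β] [Field K]

theorem sum_mul_prod_eq_mul_prod_erase (f : ι → β → K) (w : β → K) (r : ι) :
    ∑ x : ι → β, w (x r) * ∏ l, f l (x l) =
      (∑ b, w b * f r b) * ∏ l ∈ univ.erase r, ∑ b, f l b := by
  let g : ι → β → K := fun l b => (if l = r then w b else 1) * f l b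
  have hg : ∀ x : ι → β, w (x r) * ∏ l, f l (x l) = ∏ l, g l (x l) := fun x => by
    simp only [g, prod_mul_distrib, prod_ite_eq', mem_univ, if_true]
  simp_rw [hg, ← Fintype.prod_sum, ← mul_prod_erase univ _ (mem_univ r)]
  congr 1
  · simp [g]
  · exact prod_congr rfl fun l hl => by simp [g, ne_of_mem_erase hl]

theorem sum_prod_eq_mul_prod_erase (f : ι → β → K) (r : ι) :
    ∑ x : ι → β, ∏ l, f l (x l) = (∑ b, f r b) * ∏ l ∈ univ.erase r, ∑ b, f l b := by
  simpa using sum_mul_prod_eq_mul_prod_erase f (fun _ => 1) r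

theorem sum_mul_prod_div_sum_prod (f : ι → β → K) (w : β → K) (r : ι)
    (h : ∑ x : ι → β, ∏ l, f l (x l) ≠ 0) :
    (∑ x : ι → β, w (x r) * ∏ l, f l (x l)) / ∑ x : ι → β, ∏ l, f l (x l) =
      (∑ b, w b * f r b) / ∑ b, f r b := by
  rw [sum_prod_eq_mul_prod_erase f r] at h ⊢
  rw [sum_mul_prod_eq_mul_prod_erase, mul_div_mul_right _ _ (right_ne_zero_of_mul h)]

end ProductMarginal

section BooleanKalmanFilter

variable {n : ℕ} (p q : ℝ) (y : Fin n → Bool) (P : Fin n → ℝ)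

noncomputable def nodeWeight (l : Fin n) (b : Bool) : ℝ :=
  (bToR (y l) * (p * bToR b + (1 - q) * (1 - bToR b)) +
      (1 - bToR (y l)) * (q * (1 - bToR b) + (1 - p) * bToR b)) *
    (P l * bToR b + (1 - P l) * (1 - bToR b))

theorem Tlike_mul_piStar (x : Fin n → Bool) :
    Tlike p q y x * piStar P x = ∏ l, nodeWeight p q y P l (x l) :=
  prod_mul_distrib.symm

theorem sum_bToR_mul_nodeWeight (r : Fin n) :
    ∑ b, bToR b * nodeWeight p q y P r b =
      p * bToR (y r) * P r + (1 - bToR (y r)) * (1 - p) * P r := by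
  cases hy : y r <;> simp [nodeWeight, bToR, hy]

theorem sum_nodeWeight (r : Fin n) :
    ∑ b, nodeWeight p q y P r b =
      bToR (y r) * (p * P r + (1 - q) * (1 - P r)) +
        (1 - bToR (y r)) * ((1 - p) * P r + q * (1 - P r)) := by
  cases hy : y r <;> simp [nodeWeight, bToR, hy]

end BooleanKalmanFilter

theorem XTPiStar_eq_Bayes_general {n : ℕ} (p q : ℝ)
    (y : Fin n → Bool) (P : Fin n → ℝ)
    (hden : ∑ x : Fin n → Bool, Tlike p q y x * piStar P x ≠ 0)
    (r : Fin n) :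
    (∑ x : Fin n → Bool, bToR (x r) * Tlike p q y x * piStar P x) /
        (∑ x : Fin n → Bool, Tlike p q y x * piStar P x) =
      (p * bToR (y r) * P r + (1 - bToR (y r)) * (1 - p) * P r) /
        (bToR (y r) * (p * P r + (1 - q) * (1 - P r)) +
          (1 - bToR (y r)) * ((1 - p) * P r + q * (1 - P r))) := by
  simp only [Tlike_mul_piStar] at hden
  simp only [mul_assoc (bToR _), Tlike_mul_piStar]
  rw [sum_mul_prod_div_sum_prod _ _ r hden, sum_bToR_mul_nodeWeight, sum_nodeWeight]

/-- Theorem 3, BKF observation update equals the MFA Bayes update: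
if the normalizing constant `T(y)ᵀ Π*(P)` is nonzero, then the `r`-th posterior
marginal `(X (T(y) ∘ Π*(P)) / (T(y)ᵀ Π*(P)))_r` equals the single-node Bayes update. -/
theorem XTPiStar_eq_Bayes {n : ℕ} (hn : 1 ≤ n) (p q : ℝ)
    (hp : p ∈ Set.Icc (0 : ℝ) 1) (hq : q ∈ Set.Icc (0 : ℝ) 1)
    (y : Fin n → Bool) (P : Fin n → ℝ) (hP : ∀ l, P l ∈ Set.Icc (0 : ℝ) 1)
    (hden : ∑ x : Fin n → Bool, Tlike p q y x * piStar P x ≠ 0)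
    (r : Fin n) :
    (∑ x : Fin n → Bool, bToR (x r) * Tlike p q y x * piStar P x) /
        (∑ x : Fin n → Bool, Tlike p q y x * piStar P x) =
      (p * bToR (y r) * P r + (1 - bToR (y r)) * (1 - p) * P r) /
        (bToR (y r) * (p * P r + (1 - q) * (1 - P r)) +
          (1 - bToR (y r)) * ((1 - p) * P r + q * (1 - P r))) :=
  XTPiStar_eq_Bayes_general p q y P hden r
end
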